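/- In the coinvariant group C(Ω,Z)/{f − f∘τ}, the class of the characteristic function of 2ⁿΩ + k equals the class of the characteristic function of 2ⁿΩ, and the class of the characteristic function of 2ⁿΩ equals 2 times the class of the characteristic function of 2^{n+1}Ω. -/

import Mathlib

/-- The set `2ⁿΩ + k` inside the dyadic integers. -/
def dyadicBall (n : ℕ) (k : ℤ_[2]) : Set ℤ_[2] := {x | ∃ y, x = 2 ^ n * y + k}

/-- The odometer `x ↦ x + 1` on the dyadic integers, as a continuous map. -/
noncomputable def tau : C(ℤ_[2], ℤ_[2]) := ⟨fun x => x + 1, by continuity⟩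

/-- The subgroup of `C(Ω, ℤ)` generated by the elements `f - f ∘ τ`. -/
noncomputable def coinvRel : AddSubgroup C(ℤ_[2], ℤ) :=
  AddSubgroup.closure {g | ∃ f : C(ℤ_[2], ℤ), g = f - f.comp tau}

/-!
Translating `2ⁿΩ + c` by `τ` gives `2ⁿΩ + (c + 1)`, and `χ_E ∘ τ = χ_{τ⁻¹E}` has the same
class as `χ_E`; iterating in both directions moves the centre by any integer. For the second
identity, splitting `y` in `x = 2ⁿy + c` by parity writes `2ⁿΩ + c` as the disjoint union of
`2ⁿ⁺¹Ω + c` and `2ⁿ⁺¹Ω + (c + 2ⁿ)`, and the second piece is an integer translate of the first.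
-/

namespace PadicInt

lemma exists_eq_two_mul_or_eq_two_mul_add_one (y : ℤ_[2]) :
    ∃ z, y = 2 * z ∨ y = 2 * z + 1 := by
  obtain ⟨z, hz⟩ := Ideal.mem_span_singleton'.1
    (maximalIdeal_eq_span_p (p := 2) ▸ sub_zmodRepr_mem y)
  have hr : y.zmodRepr < 2 := zmodRepr_lt_p y
  refine ⟨z, ?_⟩
  interval_cases y.zmodRepr
  · left; push_cast at hz; linear_combination -hz
  · right; push_cast at hz; linear_combination -hz

lemma two_mul_ne_two_mul_add_one (y z : ℤ_[2]) : 2 * y ≠ 2 * z + 1 := by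
  intro h
  have hunit : IsUnit (2 : ℤ_[2]) := IsUnit.of_mul_eq_one (y - z) (by linear_combination h)
  exact p_nonunit (p := 2) (by exact_mod_cast hunit)

end PadicInt

open PadicInt

lemma dyadicBall_eq_closedBall (n : ℕ) (c : ℤ_[2]) :
    dyadicBall n c = Metric.closedBall c ((2 : ℝ) ^ (-(n : ℤ))) := by
  ext x
  simp only [dyadicBall, Set.mem_ofPred_eq, Metric.mem_closedBall, dist_eq_norm]
  rw [show ((2 : ℝ) ^ (-(n : ℤ))) = (2 : ℕ) ^ (-(n : ℤ)) by norm_num,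
    norm_le_pow_iff_mem_span_pow, Ideal.mem_span_singleton]
  constructor
  · rintro ⟨y, rfl⟩
    exact ⟨y, by push_cast; ring⟩
  · rintro ⟨y, hy⟩
    exact ⟨y, by push_cast at hy ⊢; linear_combination hy⟩

lemma isClopen_dyadicBall (n : ℕ) (c : ℤ_[2]) : IsClopen (dyadicBall n c) := by
  rw [dyadicBall_eq_closedBall]
  exact IsUltrametricDist.isClopen_closedBall c (by positivity)

lemma preimage_tau_dyadicBall (n : ℕ) (c : ℤ_[2]) :
    tau ⁻¹' dyadicBall n c = dyadicBall n (c - 1) := by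
  ext x
  simp only [Set.mem_preimage, dyadicBall, Set.mem_ofPred_eq, tau, ContinuousMap.coe_mk]
  exact exists_congr fun y => ⟨fun h => by linear_combination h, fun h => by linear_combination h⟩

lemma dyadicBall_eq_union (n : ℕ) (c : ℤ_[2]) :
    dyadicBall n c = dyadicBall (n + 1) c ∪ dyadicBall (n + 1) (c + 2 ^ n) := by
  ext x
  simp only [dyadicBall, Set.mem_union, Set.mem_ofPred_eq]
  constructor
  · rintro ⟨y, rfl⟩
    obtain ⟨z, rfl | rfl⟩ := exists_eq_two_mul_or_eq_two_mul_add_one y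
    · exact Or.inl ⟨z, by ring⟩
    · exact Or.inr ⟨z, by ring⟩
  · rintro (⟨z, rfl⟩ | ⟨z, rfl⟩)
    · exact ⟨2 * z, by ring⟩
    · exact ⟨2 * z + 1, by ring⟩

lemma disjoint_dyadicBall_succ (n : ℕ) (c : ℤ_[2]) :
    Disjoint (dyadicBall (n + 1) c) (dyadicBall (n + 1) (c + 2 ^ n)) := by
  refine Set.disjoint_left.2 ?_
  rintro x ⟨y, rfl⟩ ⟨z, hz⟩
  have hpow : (2 : ℤ_[2]) ^ n * (2 * y - (2 * z + 1)) = 0 := by linear_combination hz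
  rcases mul_eq_zero.1 hpow with h | h
  · exact pow_ne_zero n two_ne_zero h
  · exact two_mul_ne_two_mul_add_one y z (sub_eq_zero.1 h)

noncomputable def dyadicIndicator (n : ℕ) (c : ℤ_[2]) : C(ℤ_[2], ℤ) :=
  ⟨(dyadicBall n c).indicator 1, by
    simpa only [LocallyConstant.coe_charFn] using
      (LocallyConstant.charFn ℤ (isClopen_dyadicBall n c)).continuous⟩

lemma dyadicIndicator_apply (n : ℕ) (c : ℤ_[2]) (x : ℤ_[2]) :
    dyadicIndicator n c x = (dyadicBall n c).indicator 1 x := rfl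

lemma dyadicIndicator_comp_tau (n : ℕ) (c : ℤ_[2]) :
    (dyadicIndicator n c).comp tau = dyadicIndicator n (c - 1) := by
  ext x
  rw [ContinuousMap.comp_apply, dyadicIndicator_apply, dyadicIndicator_apply,
    ← preimage_tau_dyadicBall, ← Set.indicator_comp_right]
  rfl

lemma dyadicIndicator_eq_add (n : ℕ) (c : ℤ_[2]) :
    dyadicIndicator n c = dyadicIndicator (n + 1) c + dyadicIndicator (n + 1) (c + 2 ^ n) := by
  ext x
  rw [ContinuousMap.add_apply, dyadicIndicator_apply, dyadicBall_eq_union,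
    Set.indicator_union_of_disjoint (disjoint_dyadicBall_succ n c)]
  rfl

lemma mk_comp_tau (f : C(ℤ_[2], ℤ)) :
    (QuotientAddGroup.mk (f.comp tau) : C(ℤ_[2], ℤ) ⧸ coinvRel) = QuotientAddGroup.mk f :=
  (QuotientAddGroup.eq_iff_sub_mem.2 (AddSubgroup.subset_closure (k := {g | ∃ f : C(ℤ_[2], ℤ),
    g = f - f.comp tau}) ⟨f, rfl⟩)).symm

lemma mk_dyadicIndicator_sub_one (n : ℕ) (c : ℤ_[2]) :
    (QuotientAddGroup.mk (dyadicIndicator n (c - 1)) : C(ℤ_[2], ℤ) ⧸ coinvRel) =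
      QuotientAddGroup.mk (dyadicIndicator n c) := by
  rw [← dyadicIndicator_comp_tau, mk_comp_tau]

lemma mk_dyadicIndicator_add_intCast (n : ℕ) (c : ℤ_[2]) (k : ℤ) :
    (QuotientAddGroup.mk (dyadicIndicator n (c + k)) : C(ℤ_[2], ℤ) ⧸ coinvRel) =
      QuotientAddGroup.mk (dyadicIndicator n c) := by
  induction k using Int.induction_on with
  | zero => rw [Int.cast_zero, add_zero]
  | succ k ih =>
    rw [← ih, ← mk_dyadicIndicator_sub_one n (c + ((k + 1 : ℤ) : ℤ_[2]))]
    congr 2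
    push_cast
    ring
  | pred k ih =>
    rw [← ih, ← mk_dyadicIndicator_sub_one n (c + ((-k : ℤ) : ℤ_[2]))]
    congr 2
    push_cast
    ring

/-- In the coinvariant group `C(Ω, ℤ)/{f - f∘τ}`, the class of `χ_{2ⁿΩ+k}`
equals the class of `χ_{2ⁿΩ}`, and the class of `χ_{2ⁿΩ}` equals twice the
class of `χ_{2ⁿ⁺¹Ω}`. -/
theorem stmt8 (n : ℕ) (k : ℤ) (f g h : C(ℤ_[2], ℤ))
    (hf : ∀ x, f x = Set.indicator (dyadicBall n (k : ℤ_[2])) (fun _ => (1 : ℤ)) x)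
    (hg : ∀ x, g x = Set.indicator (dyadicBall n 0) (fun _ => (1 : ℤ)) x)
    (hh : ∀ x, h x = Set.indicator (dyadicBall (n + 1) 0) (fun _ => (1 : ℤ)) x) :
    (QuotientAddGroup.mk f : C(ℤ_[2], ℤ) ⧸ coinvRel) = QuotientAddGroup.mk g ∧
    (QuotientAddGroup.mk g : C(ℤ_[2], ℤ) ⧸ coinvRel) = 2 • QuotientAddGroup.mk h := by
  obtain rfl : f = dyadicIndicator n k := ContinuousMap.ext hf
  obtain rfl : g = dyadicIndicator n 0 := ContinuousMap.ext hg
  obtain rfl : h = dyadicIndicator (n + 1) 0 := ContinuousMap.ext hh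
  constructor
  · simpa only [zero_add] using mk_dyadicIndicator_add_intCast n 0 k
  · have hshift := mk_dyadicIndicator_add_intCast (n + 1) 0 (2 ^ n)
    rw [Int.cast_pow, Int.cast_ofNat] at hshift
    rw [dyadicIndicator_eq_add, QuotientAddGroup.mk_add, hshift, two_nsmul]
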